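/- arXiv:2306.12750 — 5 statements merged into one kernel-verified Lean document; each statement's English description precedes it below -/
import Mathlib

section
/- Let A be a ring, e ∈ A an idempotent, and M a left eAe-module. The assignment sending p⊗m ∈ Ae ⊗_{eAe} M to the map a ↦ (e·a·p·e)·m is a well-defined homomorphism of left A-modules ν_M : Ae ⊗_{eAe} M → Hom_{eAe}(A, M), where Hom_{eAe}(A,M) carries the left A-module structure (b·φ)(a) = φ(a·b). -/
open DirectSum


universe u

section Common

variable {A : Type u} [Ring A]

/-- The left ideal `Ae = {x | x * e = x}`. -/
def lIdeal (e : A) : Submodule A A where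
  carrier := {x | x * e = x}
  add_mem' := by intro a b ha hb; simp only [Set.mem_setOf_eq] at *; rw [add_mul, ha, hb]
  zero_mem' := by simp
  smul_mem' := by intro c x hx; simp only [Set.mem_setOf_eq, smul_eq_mul] at *; rw [mul_assoc, hx]

/-- The right ideal `eA = {x | e * x = x}`, as an additive subgroup. -/
def rIdeal (e : A) : AddSubgroup A where
  carrier := {x | e * x = x}
  add_mem' := by intro a b ha hb; simp only [Set.mem_setOf_eq] at *; rw [mul_add, ha, hb]
  zero_mem' := by simp
  neg_mem' := by intro a ha; simp only [Set.mem_setOf_eq] at *; rw [mul_neg, ha]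

/-- The additive subgroup `eAe = {x | e * x = x ∧ x * e = x}`. -/
def cornerAdd (e : A) : AddSubgroup A where
  carrier := {x | e * x = x ∧ x * e = x}
  add_mem' := by
    rintro a b ⟨ha1, ha2⟩ ⟨hb1, hb2⟩
    exact ⟨by rw [mul_add, ha1, hb1], by rw [add_mul, ha2, hb2]⟩
  zero_mem' := ⟨by simp, by simp⟩
  neg_mem' := by rintro a ⟨h1, h2⟩; exact ⟨by rw [mul_neg, h1], by rw [neg_mul, h2]⟩

/-- The corner ring `eAe` of an idempotent `e`. -/
def Corner (e : A) (_he : IsIdempotentElem e) : Type u := ↥(cornerAdd e)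

namespace Corner

variable {e : A} {he : IsIdempotentElem e}

instance : AddCommGroup (Corner e he) := inferInstanceAs (AddCommGroup ↥(cornerAdd e))

instance instRing : Ring (Corner e he) where
  __ := (inferInstance : AddCommGroup (Corner e he))
  mul x y := ⟨x.1 * y.1, by rw [← mul_assoc, x.2.1], by rw [mul_assoc, y.2.2]⟩
  one := ⟨e, he, he⟩
  mul_assoc x y z := Subtype.ext (mul_assoc _ _ _)
  one_mul x := Subtype.ext x.2.1
  mul_one x := Subtype.ext x.2.2
  left_distrib x y z := Subtype.ext (mul_add _ _ _)
  right_distrib x y z := Subtype.ext (add_mul _ _ _)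
  zero_mul x := Subtype.ext (zero_mul _)
  mul_zero x := Subtype.ext (mul_zero _)

@[simp] lemma val_mul (x y : Corner e he) : (x * y).1 = x.1 * y.1 := rfl
@[simp] lemma val_one : (1 : Corner e he).1 = e := rfl
@[simp] lemma val_add (x y : Corner e he) : (x + y).1 = x.1 + y.1 := rfl

end Corner

end Common
section Common2

variable {A : Type u} [Ring A] {e : A} {he : IsIdempotentElem e}

/-- `eF = {x ∈ F | e • x = x}`, realising `eA ⊗_A F`. -/
def eSub (e : A) (F : Type u) [AddCommGroup F] [Module A F] : AddSubgroup F where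
  carrier := {x | e • x = x}
  add_mem' := by intro a b ha hb; simp only [Set.mem_setOf_eq] at *; rw [smul_add, ha, hb]
  zero_mem' := by simp
  neg_mem' := by intro a ha; simp only [Set.mem_setOf_eq] at *; rw [smul_neg, ha]

variable {F : Type u} [AddCommGroup F] [Module A F]

instance : SMul (Corner e he) ↥(eSub e F) :=
  ⟨fun c x => ⟨c.1 • x.1, by
    show e • (c.1 • x.1) = c.1 • x.1
    rw [← mul_smul, c.2.1]⟩⟩

@[simp] lemma eSub_smul_val (c : Corner e he) (x : ↥(eSub e F)) :
    (c • x : ↥(eSub e F)).1 = c.1 • x.1 := rfl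

instance : Module (Corner e he) ↥(eSub e F) where
  smul := (· • ·)
  one_smul x := Subtype.ext (by show e • x.1 = x.1; exact x.2)
  mul_smul c d x := Subtype.ext (by show (c.1 * d.1) • x.1 = c.1 • d.1 • x.1; rw [mul_smul])
  smul_zero c := Subtype.ext (by show c.1 • (0 : F) = 0; simp)
  smul_add c x y := Subtype.ext (by show c.1 • (x.1 + y.1) = c.1 • x.1 + c.1 • y.1; rw [smul_add])
  add_smul c d x := Subtype.ext (by show (c.1 + d.1) • x.1 = c.1 • x.1 + d.1 • x.1; rw [add_smul])
  zero_smul x := Subtype.ext (by show (0 : A) • x.1 = 0; simp)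

/-- `eA` as a left module over the corner ring. -/
instance : SMul (Corner e he) ↥(rIdeal e) :=
  ⟨fun c q => ⟨c.1 * q.1, by show e * (c.1 * q.1) = c.1 * q.1; rw [← mul_assoc, c.2.1]⟩⟩

@[simp] lemma rIdeal_smul_val (c : Corner e he) (q : ↥(rIdeal e)) :
    (c • q : ↥(rIdeal e)).1 = c.1 * q.1 := rfl

instance : Module (Corner e he) ↥(rIdeal e) where
  smul := (· • ·)
  one_smul q := Subtype.ext (by show e * q.1 = q.1; exact q.2)
  mul_smul c d q := Subtype.ext (by show (c.1 * d.1) * q.1 = c.1 * (d.1 * q.1); rw [mul_assoc])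
  smul_zero c := Subtype.ext (by show c.1 * (0 : A) = 0; simp)
  smul_add c q q' := Subtype.ext (by show c.1 * (q.1 + q'.1) = c.1 * q.1 + c.1 * q'.1; rw [mul_add])
  add_smul c d q := Subtype.ext (by show (c.1 + d.1) * q.1 = c.1 * q.1 + d.1 * q.1; rw [add_mul])
  zero_smul q := Subtype.ext (by show (0 : A) * q.1 = 0; simp)

/-- `Hom_{eAe}(A, M)`, where `A` carries the (non-unital) left `eAe`-action by
left multiplication: additive maps `φ : A → M` with `φ((exe)·a) = (exe)•φ(a)`. -/
def homSub (e : A) (he : IsIdempotentElem e) (M : Type u) [AddCommGroup M]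
    [Module (Corner e he) M] : AddSubgroup (A →+ M) where
  carrier := {φ | ∀ (c : Corner e he) (a : A), φ (c.1 * a) = c • φ a}
  add_mem' := by intro φ ψ hφ hψ c a; simp [hφ c a, hψ c a, smul_add]
  zero_mem' := by intro c a; simp
  neg_mem' := by intro φ hφ c a; simp [hφ c a]

/-- For `p ∈ Ae` and `a ∈ A`, the element `e a p e = e (a p) e` of the corner ring. -/
def cornerMul (e : A) (he : IsIdempotentElem e) (p : ↥(lIdeal e)) (a : A) : Corner e he :=
  ⟨e * (a * p.1),
   by simp only [← mul_assoc]; rw [he],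
   by have hp : p.1 * e = p.1 := p.2
      simp only [mul_assoc]; rw [hp]⟩

/-- `e` as an element of `Ae`. -/
def lUnit (e : A) (he : IsIdempotentElem e) : ↥(lIdeal e) := ⟨e, he⟩

/-- A tensor product `Ae ⊗_{eAe} N` of the right `eAe`-module `Ae` with a left
`eAe`-module `N`: an abelian group `T` with a balanced biadditive pairing which is
universal among such. -/
structure CornerTensor (e : A) (he : IsIdempotentElem e) (N : Type u) [AddCommGroup N]
    [Module (Corner e he) N] (T : Type u) [AddCommGroup T] : Type (u + 1) where
  pair : ↥(lIdeal e) →+ N →+ T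
  balanced : ∀ (p : ↥(lIdeal e)) (c : Corner e he) (m : N),
    pair ⟨p.1 * c.1, by show (p.1 * c.1) * e = p.1 * c.1; rw [mul_assoc, c.2.2]⟩ m
      = pair p (c • m)
  span : AddSubgroup.closure (Set.range fun z : ↥(lIdeal e) × N => pair z.1 z.2) = ⊤
  lift : ∀ {P : Type u} [AddCommGroup P] (g : ↥(lIdeal e) →+ N →+ P),
    (∀ (p : ↥(lIdeal e)) (c : Corner e he) (m : N),
      g ⟨p.1 * c.1, by show (p.1 * c.1) * e = p.1 * c.1; rw [mul_assoc, c.2.2]⟩ m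
        = g p (c • m)) → (T →+ P)
  lift_pair : ∀ {P : Type u} [AddCommGroup P] (g : ↥(lIdeal e) →+ N →+ P) (hg) (p : ↥(lIdeal e))
    (m : N), lift g hg (pair p m) = g p m

end Common2
section Fam

variable {A : Type u} [Ring A] {n : ℕ}

/-- For a complete set of orthogonal idempotents `e₀,…,e_n`, the element
`f_i = e₀ + e_i` is again idempotent. -/
lemma fIdem (e : Fin (n + 1) → A) (hidem : ∀ i, IsIdempotentElem (e i))
    (horth : ∀ i j, i ≠ j → e i * e j = 0) (i : Fin n) :
    IsIdempotentElem (e 0 + e i.succ) := by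
  have h1 := hidem 0
  have h2 := hidem i.succ
  have h3 := horth 0 i.succ (Fin.succ_ne_zero i).symm
  have h4 := horth i.succ 0 (Fin.succ_ne_zero i)
  unfold IsIdempotentElem at *
  rw [add_mul, mul_add, mul_add, h1, h2, h3, h4, add_zero, zero_add]

end Fam

/-! The map `p ⊗ m ↦ (a ↦ (e a p e) • m)` comes from the biadditive pairing
`(p, m) ↦ (a ↦ (e a p e) • m)`, which is `eAe`-balanced because `e a (p c) e = (e a p e) c` for
`c ∈ eAe`; it lands in `Hom_{eAe}(A, M)` because `e (c a) p e = c (e a p e)`. Left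
`A`-linearity only has to be checked on pure tensors, where it is `e a (b p) e = e (a b) p e`. -/

section CornerMul

variable {A : Type u} [Ring A] {e : A} {he : IsIdempotentElem e}

@[simp] lemma val_cornerMul (p : ↥(lIdeal e)) (a : A) :
    (cornerMul e he p a).1 = e * (a * p.1) :=
  rfl

lemma cornerMul_add_right (p : ↥(lIdeal e)) (a₁ a₂ : A) :
    cornerMul e he p (a₁ + a₂) = cornerMul e he p a₁ + cornerMul e he p a₂ :=
  Subtype.ext (by simp only [val_cornerMul, Corner.val_add, add_mul, mul_add])

lemma cornerMul_add_left (p q : ↥(lIdeal e)) (a : A) :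
    cornerMul e he (p + q) a = cornerMul e he p a + cornerMul e he q a :=
  Subtype.ext (by simp only [val_cornerMul, Corner.val_add, Submodule.coe_add, mul_add])

lemma cornerMul_corner_mul (p : ↥(lIdeal e)) (c : Corner e he) (a : A) :
    cornerMul e he p (c.1 * a) = c * cornerMul e he p a := by
  apply Subtype.ext
  rw [val_cornerMul, Corner.val_mul, val_cornerMul, ← mul_assoc c.1 e, c.2.2, mul_assoc, ← mul_assoc e c.1, c.2.1]

lemma cornerMul_mul_corner {p q : ↥(lIdeal e)} {c : Corner e he} (hq : q.1 = p.1 * c.1)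
    (a : A) : cornerMul e he q a = cornerMul e he p a * c :=
  Subtype.ext (by simp only [val_cornerMul, Corner.val_mul, hq, mul_assoc])

lemma cornerMul_smul (b : A) (p : ↥(lIdeal e)) (a : A) :
    cornerMul e he (b • p) a = cornerMul e he p (a * b) :=
  Subtype.ext (by simp only [val_cornerMul, Submodule.coe_smul, smul_eq_mul, mul_assoc])

end CornerMul

section HomSub

variable {A : Type u} [Ring A] {e : A} {he : IsIdempotentElem e}
  {M : Type u} [AddCommGroup M] [Module (Corner e he) M]

variable (e he M) in
def cornerPairing : ↥(lIdeal e) →+ M →+ ↥(homSub e he M) :=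
  AddMonoidHom.mk'
    (fun p => AddMonoidHom.mk'
      (fun m => ⟨AddMonoidHom.mk' (fun a => cornerMul e he p a • m)
          (fun a₁ a₂ => by rw [cornerMul_add_right, add_smul]),
        fun c a => by rw [AddMonoidHom.mk'_apply, cornerMul_corner_mul, mul_smul]⟩)
      (fun m₁ m₂ => Subtype.ext (AddMonoidHom.ext fun a => smul_add _ m₁ m₂)))
    (fun p q => AddMonoidHom.ext fun m => Subtype.ext (AddMonoidHom.ext fun a => by
      show cornerMul e he (p + q) a • m = cornerMul e he p a • m + cornerMul e he q a • m
      rw [cornerMul_add_left, add_smul]))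

lemma cornerPairing_apply (p : ↥(lIdeal e)) (m : M) (a : A) :
    ((cornerPairing e he M p m).1 : A →+ M) a = cornerMul e he p a • m :=
  rfl

lemma cornerPairing_balanced (p : ↥(lIdeal e)) (c : Corner e he) (m : M) :
    cornerPairing e he M
        ⟨p.1 * c.1, by show (p.1 * c.1) * e = p.1 * c.1; rw [mul_assoc, c.2.2]⟩ m
      = cornerPairing e he M p (c • m) :=
  Subtype.ext (AddMonoidHom.ext fun a => by
    rw [cornerPairing_apply, cornerPairing_apply, cornerMul_mul_corner rfl, mul_smul])

variable (M) in
/-- The left action `(b • φ)(a) = φ (a * b)` of `b ∈ A` on `Hom_{eAe}(A, M)`. -/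
def homSubShift (b : A) : ↥(homSub e he M) →+ ↥(homSub e he M) :=
  AddMonoidHom.mk'
    (fun φ => ⟨φ.1.comp (AddMonoidHom.mulRight b),
      fun c a => by simp only [AddMonoidHom.comp_apply, AddMonoidHom.coe_mulRight, mul_assoc,
        φ.2 c (a * b)]⟩)
    (fun _ _ => rfl)

lemma homSubShift_apply (b : A) (φ : ↥(homSub e he M)) (a : A) :
    ((homSubShift M b φ).1 : A →+ M) a = (φ.1 : A →+ M) (a * b) :=
  rfl

end HomSub

lemma CornerTensor.addMonoidHom_ext {A : Type u} [Ring A] {e : A} {he : IsIdempotentElem e}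
    {N T P : Type u} [AddCommGroup N] [Module (Corner e he) N] [AddCommGroup T]
    [AddCommGroup P] (ct : CornerTensor e he N T) {f g : T →+ P}
    (h : ∀ p m, f (ct.pair p m) = g (ct.pair p m)) : f = g :=
  AddMonoidHom.eq_of_eqOn_dense ct.span (by rintro _ ⟨⟨p, m⟩, rfl⟩; exact h p m)

/-- Let `A` be a ring, `e ∈ A` an idempotent and `M` a left `eAe`-module.
The assignment sending `p ⊗ m ∈ Ae ⊗_{eAe} M` to the map `a ↦ (e·a·p·e)·m` is a
well-defined homomorphism of left `A`-modules `ν_M : Ae ⊗_{eAe} M → Hom_{eAe}(A, M)`,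
where `Hom_{eAe}(A,M)` carries the left `A`-module structure `(b·φ)(a) = φ(a·b)`.
Here the tensor product `Ae ⊗_{eAe} M` is presented by a `CornerTensor` datum `(T, pair)`. -/
theorem stmt_1 {A M T : Type u} [Ring A] (e : A) (he : IsIdempotentElem e)
    [AddCommGroup M] [Module (Corner e he) M]
    [AddCommGroup T] [Module A T] (ct : CornerTensor e he M T)
    (hT : ∀ (b : A) (p : ↥(lIdeal e)) (m : M), b • ct.pair p m = ct.pair (b • p) m) :
    ∃ ν : T →+ ↥(homSub e he M),
      (∀ (p : ↥(lIdeal e)) (m : M) (a : A),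
        ((ν (ct.pair p m)).1 : A →+ M) a = cornerMul e he p a • m) ∧
      (∀ (b : A) (t : T) (a : A),
        ((ν (b • t)).1 : A →+ M) a = ((ν t).1 : A →+ M) (a * b)) := by
  set ν := ct.lift (cornerPairing e he M) cornerPairing_balanced
  have ν_pair : ∀ p m, ν (ct.pair p m) = cornerPairing e he M p m :=
    ct.lift_pair _ cornerPairing_balanced
  refine ⟨ν, fun p m a => by rw [ν_pair, cornerPairing_apply], fun b t a => ?_⟩
  have hν : ν.comp (DistribSMul.toAddMonoidHom T b) = (homSubShift M b).comp ν :=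
    ct.addMonoidHom_ext fun p m => Subtype.ext (AddMonoidHom.ext fun a' => by
      simp only [AddMonoidHom.comp_apply, DistribSMul.toAddMonoidHom_apply, hT, ν_pair,
        homSubShift_apply, cornerPairing_apply, cornerMul_smul])
  exact congrArg (fun φ : ↥(homSub e he M) => (φ.1 : A →+ M) a) (DFunLike.congr_fun hν t)
end

section
/- Let A be a unital ring and let e_0, e_1, …, e_n be a complete set of orthogonal idempotents of A (i.e. e_i e_j = δ_{ij} e_i and e_0 + e_1 + ⋯ + e_n = 1). For each i ∈ {1,…,n} set f_i = e_0 + e_i, which is an idempotent. Then the map Ψ : ⊕_{i=1}^n A f_i ⊗_{f_i A f_i} f_i A → A given on the i-th summand by p ⊗ q ↦ p·q is a surjective homomorphism of (A,A)-bimodules. -/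
open DirectSum


universe u

/-!
Both linearity laws are equalities of additive maps out of `⨁ i, T i`, so it suffices to check
them on the generators `p ⊗ q` of each summand, where they are associativity in `A`. By left
linearity the image of `Ψ` is a left ideal; it contains every `e j = e j * e j`, because `e j`
lies in the corner `f_i A f_i` for any `i` with `j ∈ {0, i + 1}`. Hence it contains `1 = ∑ j, e j`, and so all of `A`.
-/

theorem IsIdempotentElem.mul_add_eq_self {A : Type*} [Ring A] {x y : A}
    (hx : IsIdempotentElem x) (hxy : x * y = 0) : x * (x + y) = x := by
  rw [mul_add, hx.eq, hxy, add_zero]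

theorem IsIdempotentElem.add_mul_eq_self {A : Type*} [Ring A] {x y : A}
    (hx : IsIdempotentElem x) (hyx : y * x = 0) : (x + y) * x = x := by
  rw [add_mul, hx.eq, hyx, add_zero]

theorem AddMonoidHom.surjective_of_one_mem_range {A M : Type*} [Ring A] [AddCommGroup M]
    [Module A M] {Ψ : M →+ A} (hΨ : ∀ (b : A) t, Ψ (b • t) = b * Ψ t) (h1 : 1 ∈ Ψ.range) :
    Function.Surjective Ψ := fun a => by
  obtain ⟨t, ht⟩ := h1
  exact ⟨a • t, by rw [hΨ, ht, mul_one]⟩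

theorem CornerTensor.addHom_ext {A : Type u} [Ring A] {e : A} {he : IsIdempotentElem e}
    {N : Type u} [AddCommGroup N] [Module (Corner e he) N] {T : Type u} [AddCommGroup T]
    (ct : CornerTensor e he N T) {P : Type*} [AddGroup P] {φ ψ : T →+ P}
    (h : ∀ p m, φ (ct.pair p m) = ψ (ct.pair p m)) : φ = ψ :=
  AddMonoidHom.eq_of_eqOn_dense ct.span fun _ ⟨⟨p, m⟩, hpm⟩ => hpm ▸ h p m

section IdempotentFamily

variable {A : Type u} [Ring A] {ι : Type*} [DecidableEq ι] {f : ι → A}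
  {hf : ∀ i, IsIdempotentElem (f i)} {T : ι → Type u} [∀ i, AddCommGroup (T i)]

theorem DirectSum.addHom_ext_cornerTensor {N : ι → Type u} [∀ i, AddCommGroup (N i)]
    [∀ i, Module (Corner (f i) (hf i)) (N i)] (ct : ∀ i, CornerTensor (f i) (hf i) (N i) (T i))
    {P : Type*} [AddCommGroup P] {φ ψ : (⨁ i, T i) →+ P}
    (h : ∀ i p m, φ (of T i ((ct i).pair p m)) = ψ (of T i ((ct i).pair p m))) : φ = ψ :=
  DirectSum.addHom_ext' fun i => (ct i).addHom_ext (h i)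

variable (ct : ∀ i, CornerTensor (f i) (hf i) (rIdeal (f i)) (T i)) {Ψ : (⨁ i, T i) →+ A}
  (hΨ : ∀ i p q, Ψ (of T i ((ct i).pair p q)) = p.1 * q.1)
include hΨ

theorem map_smul_of_pair_smul [∀ i, Module A (T i)]
    (hL : ∀ i (b : A) p q, b • (ct i).pair p q = (ct i).pair (b • p) q) (b : A)
    (t : ⨁ i, T i) : Ψ (b • t) = b * Ψ t := by
  have key : Ψ.comp (DistribSMul.toAddMonoidHom _ b) = (AddMonoidHom.mulLeft b).comp Ψ :=
    DirectSum.addHom_ext_cornerTensor ct fun i p q => by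
      simp only [AddMonoidHom.comp_apply, DistribSMul.toAddMonoidHom_apply,
        AddMonoidHom.coe_mulLeft, ← DirectSum.of_smul, hL, hΨ]
      exact mul_assoc b p.1 q.1
  exact DFunLike.congr_fun key t

theorem map_op_smul_of_pair_op_smul [∀ i, Module Aᵐᵒᵖ (T i)]
    (hR : ∀ i (b : A) p (q : rIdeal (f i)), MulOpposite.op b • (ct i).pair p q
      = (ct i).pair p ⟨q.1 * b, by show f i * (q.1 * b) = q.1 * b; rw [← mul_assoc, q.2]⟩)
    (b : A) (t : ⨁ i, T i) : Ψ (MulOpposite.op b • t) = Ψ t * b := by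
  have key : Ψ.comp (DistribSMul.toAddMonoidHom _ (MulOpposite.op b))
      = (AddMonoidHom.mulRight b).comp Ψ :=
    DirectSum.addHom_ext_cornerTensor ct fun i p q => by
      simp only [AddMonoidHom.comp_apply, DistribSMul.toAddMonoidHom_apply,
        AddMonoidHom.coe_mulRight, ← DirectSum.of_smul, hR, hΨ]
      exact (mul_assoc p.1 q.1 b).symm
  exact DFunLike.congr_fun key t

theorem idempotent_mem_range {x : A} (i : ι) (hx : IsIdempotentElem x) (hxf : x * f i = x)
    (hfx : f i * x = x) : x ∈ Ψ.range :=
  ⟨of T i ((ct i).pair ⟨x, hxf⟩ ⟨x, hfx⟩), (hΨ i _ _).trans hx.eq⟩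

end IdempotentFamily

/-- Let `e₀,…,e_n` be a complete set of orthogonal idempotents of a
unital ring `A` and `f_i = e₀ + e_i`. The map
`Ψ : ⊕_{i=1}^n A f_i ⊗_{f_i A f_i} f_i A → A` given on the `i`-th summand by
`p ⊗ q ↦ p·q` is a surjective homomorphism of `(A,A)`-bimodules. -/
theorem stmt_4 {A : Type u} [Ring A] {n : ℕ} (hn : 0 < n)
    (e : Fin (n + 1) → A) (hidem : ∀ i, IsIdempotentElem (e i))
    (horth : ∀ i j, i ≠ j → e i * e j = 0) (hsum : ∑ i, e i = 1)
    (T : Fin n → Type u) [∀ i, AddCommGroup (T i)]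
    (ct : ∀ i : Fin n, CornerTensor (e 0 + e i.succ) (fIdem e hidem horth i)
      ↥(rIdeal (e 0 + e i.succ)) (T i))
    [∀ i, Module A (T i)] [∀ i, Module Aᵐᵒᵖ (T i)]
    (hL : ∀ (i : Fin n) (b : A) (p : ↥(lIdeal (e 0 + e i.succ)))
      (q : ↥(rIdeal (e 0 + e i.succ))),
      b • (ct i).pair p q = (ct i).pair (b • p) q)
    (hR : ∀ (i : Fin n) (b : A) (p : ↥(lIdeal (e 0 + e i.succ)))
      (q : ↥(rIdeal (e 0 + e i.succ))),
      MulOpposite.op b • (ct i).pair p q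
        = (ct i).pair p ⟨q.1 * b, by
            show (e 0 + e i.succ) * (q.1 * b) = q.1 * b
            rw [← mul_assoc, q.2]⟩)
    (Ψ : (⨁ i, T i) →+ A)
    (hΨ : ∀ (i : Fin n) (p : ↥(lIdeal (e 0 + e i.succ)))
      (q : ↥(rIdeal (e 0 + e i.succ))),
      Ψ (DirectSum.of T i ((ct i).pair p q)) = p.1 * q.1) :
    Function.Surjective Ψ ∧ (∀ (b : A) (t : ⨁ i, T i), Ψ (b • t) = b * Ψ t) ∧
      (∀ (b : A) (t : ⨁ i, T i), Ψ (MulOpposite.op b • t) = Ψ t * b) := by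
  have hleft := map_smul_of_pair_smul (f := fun i : Fin n => e 0 + e i.succ) ct hΨ hL
  have hright := map_op_smul_of_pair_op_smul (f := fun i : Fin n => e 0 + e i.succ) ct hΨ hR
  have h0i (i : Fin n) := horth 0 i.succ (Fin.succ_ne_zero i).symm
  have hi0 (i : Fin n) := horth i.succ 0 (Fin.succ_ne_zero i)
  have he_mem : ∀ j, e j ∈ Ψ.range := Fin.cases
    (idempotent_mem_range ct hΨ ⟨0, hn⟩ (hidem 0) ((hidem 0).mul_add_eq_self (h0i _))
      ((hidem 0).add_mul_eq_self (hi0 _)))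
    fun i => idempotent_mem_range ct hΨ i (hidem _)
      (add_comm (e 0) _ ▸ (hidem _).mul_add_eq_self (hi0 i))
      (add_comm (e 0) _ ▸ (hidem _).add_mul_eq_self (h0i i))
  exact ⟨Ψ.surjective_of_one_mem_range hleft (hsum ▸ sum_mem fun j _ => he_mem j),
    hleft, hright⟩
end

section
/- Let A be a unital ring with complete orthogonal idempotents e_0, …, e_n, and set f_i = e_0 + e_i for 1 ≤ i ≤ n. Assume the base contains 1/n (e.g. A is an algebra over a field of characteristic zero). Define P : A → ⊕_{i=1}^n A f_i ⊗_{f_i A f_i} f_i A by sending p ∈ e_j A (for 1 ≤ j ≤ n) to the tuple with f_j ⊗ p in the j-th slot and zeros elsewhere, and p ∈ e_0 A to (1/n)(f_1 ⊗ p, …, f_n ⊗ p), extended additively over the decomposition A = ⊕_{j=0}^n e_j A. Then P is a homomorphism of right A-modules, and Ψ ∘ P = id_A, where Ψ is the multiplication map of the previous statement. -/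
open DirectSum


universe u

/-! `P` and `Ψ ∘ P` are additive in `p`, and every `p` is the sum of its components `e i * p`,
so both claims reduce to the two shapes `e₀ p` and `e_j p` on which `P` is given. The `e₀ p`
component is spread evenly over the `n` summands, and `Ψ` adds the `n` copies of
`(1/n) e₀ p` back up; this is the one place where `1/n` is needed. -/

section Reduction

variable {A : Type u} [Ring A]

theorem AddMonoidHom.ext_of_sum_eq_one {ι M : Type*} [Fintype ι] [AddCommMonoid M]
    {e : ι → A} (hsum : ∑ i, e i = 1) {F G : A →+ M}
    (h : ∀ i p, F (e i * p) = G (e i * p)) : F = G := by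
  ext p
  rw [← one_mul p, ← hsum, Finset.sum_mul, map_sum, map_sum]
  exact Finset.sum_congr rfl fun i _ => h i p

theorem AddMonoidHom.ext_of_sum_fin_succ_eq_one {n : ℕ} {M : Type*} [AddCommMonoid M]
    {e : Fin (n + 1) → A} (hsum : ∑ i, e i = 1) {F G : A →+ M}
    (h₀ : ∀ p, F (e 0 * p) = G (e 0 * p))
    (hsucc : ∀ (j : Fin n) p, F (e j.succ * p) = G (e j.succ * p)) : F = G :=
  AddMonoidHom.ext_of_sum_eq_one hsum fun i => Fin.cases h₀ hsucc i

end Reduction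

theorem Finset.sum_fin_inv_natCast_smul {k M : Type*} [DivisionRing k] [CharZero k]
    [AddCommMonoid M] [Module k M] {n : ℕ} (hn : n ≠ 0) (x : M) :
    ∑ _i : Fin n, (n : k)⁻¹ • x = x := by
  rw [Finset.sum_const, Finset.card_univ, Fintype.card_fin, ← Nat.cast_smul_eq_nsmul k,
    smul_smul, mul_inv_cancel₀ (Nat.cast_ne_zero.mpr hn), one_smul]

/-- With `A` a unital algebra over a field `k` of characteristic zero,
`e₀,…,e_n` complete orthogonal idempotents, `f_i = e₀+e_i`, the map
`P : A → ⊕_{i=1}^n A f_i ⊗_{f_i A f_i} f_i A` sending `p ∈ e_j A` (for `j ≥ 1`) to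
`f_j ⊗ p` in the `j`-th slot and `p ∈ e₀ A` to `(1/n)(f_1 ⊗ p, …, f_n ⊗ p)` is a
homomorphism of right `A`-modules, and `Ψ ∘ P = id_A`. -/
theorem stmt_5 {k A : Type u} [Field k] [CharZero k] [Ring A] [Algebra k A]
    {n : ℕ} (hn : 0 < n)
    (e : Fin (n + 1) → A) (hidem : ∀ i, IsIdempotentElem (e i))
    (horth : ∀ i j, i ≠ j → e i * e j = 0) (hsum : ∑ i, e i = 1)
    (T : Fin n → Type u) [∀ i, AddCommGroup (T i)]
    (ct : ∀ i : Fin n, CornerTensor (e 0 + e i.succ) (fIdem e hidem horth i)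
      ↥(rIdeal (e 0 + e i.succ)) (T i))
    [∀ i, Module Aᵐᵒᵖ (T i)]
    (hR : ∀ (i : Fin n) (b : A) (p : ↥(lIdeal (e 0 + e i.succ)))
      (q : ↥(rIdeal (e 0 + e i.succ))),
      MulOpposite.op b • (ct i).pair p q
        = (ct i).pair p ⟨q.1 * b, by
            show (e 0 + e i.succ) * (q.1 * b) = q.1 * b
            rw [← mul_assoc, q.2]⟩)
    (Ψ : (⨁ i, T i) →+ A)
    (hΨ : ∀ (i : Fin n) (p : ↥(lIdeal (e 0 + e i.succ)))
      (q : ↥(rIdeal (e 0 + e i.succ))),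
      Ψ (DirectSum.of T i ((ct i).pair p q)) = p.1 * q.1)
    (P : A →+ ⨁ i, T i)
    (hP0 : ∀ p : A, P (e 0 * p) = ∑ i : Fin n, DirectSum.of T i ((ct i).pair
        ⟨e 0 + e i.succ, (fIdem e hidem horth i)⟩
        ⟨(n : k)⁻¹ • (e 0 * p), by
          show (e 0 + e i.succ) * ((n : k)⁻¹ • (e 0 * p)) = (n : k)⁻¹ • (e 0 * p)
          rw [mul_smul_comm, ← mul_assoc, add_mul, (hidem 0).eq,
            horth i.succ 0 (Fin.succ_ne_zero i), add_zero]⟩))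
    (hPs : ∀ (j : Fin n) (p : A), P (e j.succ * p) = DirectSum.of T j ((ct j).pair
        ⟨e 0 + e j.succ, (fIdem e hidem horth j)⟩
        ⟨e j.succ * p, by
          show (e 0 + e j.succ) * (e j.succ * p) = e j.succ * p
          rw [← mul_assoc, add_mul, horth 0 j.succ (Fin.succ_ne_zero j).symm,
            (hidem j.succ).eq, zero_add]⟩)) :
    (∀ (p a : A), P (p * a) = MulOpposite.op a • P p) ∧ (∀ p : A, Ψ (P p) = p) := by
  have smul_of_pair : ∀ (a : A) i p (q q' : ↥(rIdeal (e 0 + e i.succ))), q'.1 = q.1 * a →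
      MulOpposite.op a • DirectSum.of T i ((ct i).pair p q)
        = DirectSum.of T i ((ct i).pair p q') :=
    fun a i p q q' hq => by
      rw [← DirectSum.of_smul, hR]
      exact congrArg _ (congrArg _ (Subtype.ext hq.symm))
  have Ψ_of_pair_unit : ∀ i (q : ↥(rIdeal (e 0 + e i.succ))),
      Ψ (DirectSum.of T i ((ct i).pair ⟨_, fIdem e hidem horth i⟩ q)) = q.1 :=
    fun i q => (hΨ i _ q).trans q.2
  refine ⟨fun p a => ?_, fun p => ?_⟩
  · show (P.comp (AddMonoidHom.mulRight a)) p
      = ((DistribSMul.toAddMonoidHom _ (MulOpposite.op a)).comp P) p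
    congr 1
    refine AddMonoidHom.ext_of_sum_fin_succ_eq_one hsum (fun p => ?_) (fun j p => ?_)
    · simp only [AddMonoidHom.comp_apply, AddMonoidHom.coe_mulRight,
        DistribSMul.toAddMonoidHom_apply, mul_assoc, hP0, Finset.smul_sum]
      exact Finset.sum_congr rfl fun i _ =>
        (smul_of_pair a i _ _ _ (by dsimp only; rw [smul_mul_assoc, mul_assoc])).symm
    · simp only [AddMonoidHom.comp_apply, AddMonoidHom.coe_mulRight,
        DistribSMul.toAddMonoidHom_apply, mul_assoc, hPs]
      exact (smul_of_pair a j _ _ _ (mul_assoc _ _ _).symm).symm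
  · show (Ψ.comp P) p = AddMonoidHom.id A p
    congr 1
    refine AddMonoidHom.ext_of_sum_fin_succ_eq_one hsum (fun p => ?_) (fun j p => ?_)
    · rw [AddMonoidHom.comp_apply, hP0, map_sum,
        Finset.sum_congr rfl fun i _ => Ψ_of_pair_unit i _]
      exact Finset.sum_fin_inv_natCast_smul hn.ne' _
    · rw [AddMonoidHom.comp_apply, hPs, Ψ_of_pair_unit]
      rfl
end

section
/- Let A be a unital algebra over a field of characteristic zero with complete orthogonal idempotents e_0,…,e_n, and f_i = e_0 + e_i. Then for every left A-module F, the natural map ψ_F : ⊕_{i=1}^n A f_i ⊗_{f_i A f_i} f_i A ⊗_A F → F, given on the i-th summand by p ⊗ q ⊗ x ↦ (pq)·x, is surjective. -/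
/-!
Every `y ∈ F` is `∑ⱼ eⱼ y`, and each `eⱼ` lies in some left ideal `A fᵢ` (for `j = 0` any `i`
will do, for `j ≥ 1` take `i = j`). For `p ∈ A fᵢ` the element `p y = p (fᵢ y)` is the image of
`p ⊗ fᵢ y` under the `i`-th summand of `ψ`.
-/

open DirectSum


universe u

section Surjectivity

variable {A : Type u} [Ring A]

lemma smul_mem_eSub {e : A} (he : IsIdempotentElem e) {F : Type u} [AddCommGroup F] [Module A F]
    (y : F) : e • y ∈ eSub e F := by
  show e • e • y = e • y
  rw [← mul_smul, he.eq]

lemma smul_mem_range_of_pair {e : A} (he : IsIdempotentElem e) {F T : Type u} [AddCommGroup F]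
    [Module A F] [AddCommGroup T] (pair : ↥(lIdeal e) →+ ↥(eSub e F) →+ T) (φ : T →+ F)
    (hφ : ∀ p x, φ (pair p x) = p.1 • x.1) (p : ↥(lIdeal e)) (y : F) : p.1 • y ∈ φ.range := by
  refine ⟨pair p ⟨e • y, smul_mem_eSub he y⟩, ?_⟩
  rw [hφ]
  show p.1 • e • y = p.1 • y
  rw [← mul_smul, p.2]

lemma exists_mul_add_succ_eq_self {n : ℕ} (hn : 0 < n) {e : Fin (n + 1) → A}
    (hidem : ∀ i, IsIdempotentElem (e i)) (horth : ∀ i j, i ≠ j → e i * e j = 0)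
    (j : Fin (n + 1)) : ∃ i : Fin n, e j * (e 0 + e i.succ) = e j := by
  rcases eq_or_ne j 0 with rfl | hj
  · refine ⟨⟨0, hn⟩, ?_⟩
    rw [mul_add, (hidem 0).eq, horth 0 _ (Fin.succ_ne_zero _).symm, add_zero]
  · refine ⟨j.pred hj, ?_⟩
    rw [Fin.succ_pred, mul_add, (hidem j).eq, horth j 0 hj, zero_add]

end Surjectivity

theorem stmt_6_general {A F : Type u} [Ring A]
    [AddCommGroup F] [Module A F] {n : ℕ} (hn : 0 < n)
    (e : Fin (n + 1) → A) (hidem : ∀ i, IsIdempotentElem (e i))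
    (horth : ∀ i j, i ≠ j → e i * e j = 0) (hsum : ∑ i, e i = 1)
    (T : Fin n → Type u) [∀ i, AddCommGroup (T i)]
    (ct : ∀ i : Fin n, CornerTensor (e 0 + e i.succ) (fIdem e hidem horth i)
      ↥(eSub (e 0 + e i.succ) F) (T i))
    (ψ : (⨁ i, T i) →+ F)
    (hψ : ∀ (i : Fin n) (p : ↥(lIdeal (e 0 + e i.succ)))
      (x : ↥(eSub (e 0 + e i.succ) F)),
      ψ (DirectSum.of T i ((ct i).pair p x)) = p.1 • x.1) :
    Function.Surjective ψ := by
  intro y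
  have hsummand : ∀ j, e j • y ∈ ψ.range := by
    intro j
    obtain ⟨i, hi⟩ := exists_mul_add_succ_eq_self hn hidem horth j
    obtain ⟨t, ht⟩ := smul_mem_range_of_pair (fIdem e hidem horth i) (ct i).pair
      (ψ.comp (DirectSum.of T i)) (hψ i) ⟨e j, hi⟩ y
    exact ⟨DirectSum.of T i t, ht⟩
  have hy := AddSubgroup.sum_mem ψ.range (t := Finset.univ) fun j _ => hsummand j
  rwa [← Finset.sum_smul, hsum, one_smul] at hy

/-- Let `A` be a unital algebra over a field of characteristic zero
with complete orthogonal idempotents `e₀,…,e_n` and `f_i = e₀ + e_i`. For every left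
`A`-module `F`, the natural map `ψ_F : ⊕_{i=1}^n A f_i ⊗_{f_i A f_i} f_i A ⊗_A F → F`,
given on the `i`-th summand by `p ⊗ q ⊗ x ↦ (pq)·x`, is surjective. Here
`f_i A ⊗_A F` is realised canonically as `f_i F = {x ∈ F | f_i • x = x}`. -/
theorem stmt_6 {k A F : Type u} [Field k] [CharZero k] [Ring A] [Algebra k A]
    [AddCommGroup F] [Module A F] {n : ℕ} (hn : 0 < n)
    (e : Fin (n + 1) → A) (hidem : ∀ i, IsIdempotentElem (e i))
    (horth : ∀ i j, i ≠ j → e i * e j = 0) (hsum : ∑ i, e i = 1)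
    (T : Fin n → Type u) [∀ i, AddCommGroup (T i)]
    (ct : ∀ i : Fin n, CornerTensor (e 0 + e i.succ) (fIdem e hidem horth i)
      ↥(eSub (e 0 + e i.succ) F) (T i))
    (ψ : (⨁ i, T i) →+ F)
    (hψ : ∀ (i : Fin n) (p : ↥(lIdeal (e 0 + e i.succ)))
      (x : ↥(eSub (e 0 + e i.succ) F)),
      ψ (DirectSum.of T i ((ct i).pair p x)) = p.1 • x.1) :
    Function.Surjective ψ :=
  stmt_6_general hn e hidem horth hsum T ct ψ hψ
end

section
/- Let A be a unital algebra over a field of characteristic zero with complete orthogonal idempotents e_0,…,e_n and f_i = e_0 + e_i. For every left A-module F, F is isomorphic as a left A-module to the image of the composite φ_F ∘ ψ_F : ⊕_{i=1}^n A f_i ⊗_{f_iAf_i} f_i A ⊗_A F → ⊕_{i=1}^n Hom_{f_iAf_i}(A, f_i A ⊗_A F). -/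
/-! Each `e j` is absorbed on both sides by some `f_i` (for `j = 0` any `i` will do). Hence
`φ` is injective: `x = ∑ j e j • x` and `e j • x = f_i • e j • x` is a value of `(φ x) i`.
And `ψ` is onto: `e j • x = e j • (f_i • x)` is the product of `e j ∈ A f_i` and
`f_i • x ∈ f_i F`. So `φ` maps `F` isomorphically onto `im φ = im (φ ∘ ψ)`. -/

open DirectSum


universe u

namespace OrthogonalIdempotents

variable {A I : Type*} [Ring A] {e : I → A}

lemma mul_add_of_ne_left (he : OrthogonalIdempotents e) {i j : I} (hij : i ≠ j) :
    e i * (e i + e j) = e i := by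
  rw [mul_add, (he.idem i).eq, he.ortho hij, add_zero]

lemma mul_add_of_ne_right (he : OrthogonalIdempotents e) {i j : I} (hij : i ≠ j) :
    e j * (e i + e j) = e j := by
  rw [mul_add, he.ortho hij.symm, (he.idem j).eq, zero_add]

lemma add_mul_of_ne_left (he : OrthogonalIdempotents e) {i j : I} (hij : i ≠ j) :
    (e i + e j) * e i = e i := by
  rw [add_mul, (he.idem i).eq, he.ortho hij.symm, add_zero]

lemma add_mul_of_ne_right (he : OrthogonalIdempotents e) {i j : I} (hij : i ≠ j) :
    (e i + e j) * e j = e j := by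
  rw [add_mul, he.ortho hij, (he.idem j).eq, zero_add]

lemma exists_add_succ_absorbs {n : ℕ} {e : Fin (n + 1) → A} (he : OrthogonalIdempotents e)
    (hn : 0 < n) (j : Fin (n + 1)) :
    ∃ i : Fin n, (e 0 + e i.succ) * e j = e j ∧ e j * (e 0 + e i.succ) = e j := by
  induction j using Fin.cases with
  | zero =>
    have hne : (0 : Fin (n + 1)) ≠ Fin.succ ⟨0, hn⟩ := (Fin.succ_ne_zero _).symm
    exact ⟨⟨0, hn⟩, he.add_mul_of_ne_left hne, he.mul_add_of_ne_left hne⟩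
  | succ i =>
    have hne : (0 : Fin (n + 1)) ≠ i.succ := (Fin.succ_ne_zero _).symm
    exact ⟨i, he.add_mul_of_ne_right hne, he.mul_add_of_ne_right hne⟩

end OrthogonalIdempotents

namespace CompleteOrthogonalIdempotents

variable {A M : Type u} [Ring A] [AddCommGroup M] [Module A M]

lemma sum_smul_self {I : Type*} [Fintype I] {e : I → A} (he : CompleteOrthogonalIdempotents e)
    (x : M) : ∑ i, e i • x = x := by
  rw [← Finset.sum_smul, he.complete, one_smul]

variable {n : ℕ} {e : Fin (n + 1) → A}

lemma eq_zero_of_forall_add_succ_smul_smul_eq_zero (he : CompleteOrthogonalIdempotents e)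
    (hn : 0 < n) {x : M} (hx : ∀ (i : Fin n) (a : A), (e 0 + e i.succ) • a • x = 0) : x = 0 := by
  rw [← he.sum_smul_self x]
  refine Finset.sum_eq_zero fun j _ => ?_
  obtain ⟨i, hij, -⟩ := he.toOrthogonalIdempotents.exists_add_succ_absorbs hn j
  rw [← hij, mul_smul, hx]

lemma surjective_of_map_pair (he : CompleteOrthogonalIdempotents e) (hn : 0 < n)
    {T : Fin n → Type*} [∀ i, AddCommGroup (T i)]
    (pair : ∀ i : Fin n, ↥(lIdeal (e 0 + e i.succ)) → ↥(eSub (e 0 + e i.succ) M) → T i)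
    (ψ : (⨁ i, T i) →+ M)
    (hψ : ∀ i p x, ψ (DirectSum.of T i (pair i p x)) = p.1 • x.1) :
    Function.Surjective ψ := by
  rw [← AddMonoidHom.range_eq_top, eq_top_iff]
  intro x _
  rw [← he.sum_smul_self x]
  refine AddSubgroup.sum_mem _ fun j _ => ?_
  obtain ⟨i, -, hef⟩ := he.toOrthogonalIdempotents.exists_add_succ_absorbs hn j
  have hx : (e 0 + e i.succ) • x ∈ eSub (e 0 + e i.succ) M := by
    show _ • _ • x = _ • x
    rw [← mul_smul, (fIdem e he.idem (fun _ _ h => he.ortho h) i).eq]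
  refine ⟨DirectSum.of T i (pair i ⟨e j, hef⟩ ⟨_, hx⟩), ?_⟩
  rw [hψ, ← mul_smul, hef]

end CompleteOrthogonalIdempotents

lemma AddMonoidHom.range_comp_of_surjective {G H K : Type*} [AddGroup G] [AddGroup H]
    [AddGroup K] (φ : H →+ K) {ψ : G →+ H} (hψ : Function.Surjective ψ) :
    (φ.comp ψ).range = φ.range := by
  rw [range_comp, range_eq_top.2 hψ, ← range_eq_map]

theorem stmt_9_general {A F : Type u} [Ring A]
    [AddCommGroup F] [Module A F] {n : ℕ} (hn : 0 < n)
    (e : Fin (n + 1) → A) (hidem : ∀ i, IsIdempotentElem (e i))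
    (horth : ∀ i j, i ≠ j → e i * e j = 0) (hsum : ∑ i, e i = 1)
    (T : Fin n → Type u) [∀ i, AddCommGroup (T i)]
    (ct : ∀ i : Fin n, CornerTensor (e 0 + e i.succ) (fIdem e hidem horth i)
      ↥(eSub (e 0 + e i.succ) F) (T i))
    (ψ : (⨁ i, T i) →+ F)
    (hψ : ∀ (i : Fin n) (p : ↥(lIdeal (e 0 + e i.succ)))
      (x : ↥(eSub (e 0 + e i.succ) F)),
      ψ (DirectSum.of T i ((ct i).pair p x)) = p.1 • x.1)
    (φ : F →+ ∀ i : Fin n, ↥(homSub (e 0 + e i.succ) (fIdem e hidem horth i)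
      ↥(eSub (e 0 + e i.succ) F)))
    (hφ : ∀ (x : F) (i : Fin n) (a : A),
      ((((φ x i).1 : A →+ ↥(eSub (e 0 + e i.succ) F)) a : ↥(eSub (e 0 + e i.succ) F)) : F)
        = (e 0 + e i.succ) • (a • x)) :
    ∃ E : F ≃+ ↥((φ.comp ψ).range), ∀ x : F, (E x).1 = φ x := by
  have he : CompleteOrthogonalIdempotents e := ⟨⟨hidem, horth⟩, hsum⟩
  have hφinj : Function.Injective φ := by
    refine (injective_iff_map_eq_zero φ).2 fun x hx =>
      he.eq_zero_of_forall_add_succ_smul_smul_eq_zero hn fun i a => ?_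
    rw [← hφ, hx]
    rfl
  have hψsurj : Function.Surjective ψ :=
    he.surjective_of_map_pair hn (fun i p x => (ct i).pair p x) ψ hψ
  exact ⟨(AddMonoidHom.ofInjective hφinj).trans
    (AddEquiv.addSubgroupCongr (φ.range_comp_of_surjective hψsurj).symm), fun _ => rfl⟩

/-- Let `A` be a unital algebra over a field of characteristic zero with
complete orthogonal idempotents `e₀,…,e_n` and `f_i = e₀ + e_i`. For every left
`A`-module `F`, `F` is isomorphic (compatibly with `φ_F`) to the image of the composite
`φ_F ∘ ψ_F : ⊕_{i=1}^n A f_i ⊗_{f_iAf_i} f_i A ⊗_A F → ⊕_{i=1}^n Hom_{f_iAf_i}(A, f_i A ⊗_A F)`,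
with `f_i A ⊗_A F` realised canonically as `f_i F`. -/
theorem stmt_9 {k A F : Type u} [Field k] [CharZero k] [Ring A] [Algebra k A]
    [AddCommGroup F] [Module A F] {n : ℕ} (hn : 0 < n)
    (e : Fin (n + 1) → A) (hidem : ∀ i, IsIdempotentElem (e i))
    (horth : ∀ i j, i ≠ j → e i * e j = 0) (hsum : ∑ i, e i = 1)
    (T : Fin n → Type u) [∀ i, AddCommGroup (T i)]
    (ct : ∀ i : Fin n, CornerTensor (e 0 + e i.succ) (fIdem e hidem horth i)
      ↥(eSub (e 0 + e i.succ) F) (T i))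
    (ψ : (⨁ i, T i) →+ F)
    (hψ : ∀ (i : Fin n) (p : ↥(lIdeal (e 0 + e i.succ)))
      (x : ↥(eSub (e 0 + e i.succ) F)),
      ψ (DirectSum.of T i ((ct i).pair p x)) = p.1 • x.1)
    (φ : F →+ ∀ i : Fin n, ↥(homSub (e 0 + e i.succ) (fIdem e hidem horth i)
      ↥(eSub (e 0 + e i.succ) F)))
    (hφ : ∀ (x : F) (i : Fin n) (a : A),
      ((((φ x i).1 : A →+ ↥(eSub (e 0 + e i.succ) F)) a : ↥(eSub (e 0 + e i.succ) F)) : F)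
        = (e 0 + e i.succ) • (a • x)) :
    ∃ E : F ≃+ ↥((φ.comp ψ).range), ∀ x : F, (E x).1 = φ x :=
  stmt_9_general hn e hidem horth hsum T ct ψ hψ φ hφ
end
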